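/- Let L be a real polynomial of degree b, factored as L(t) = t^a L̃(t) with L̃(0) ≠ 0. Suppose f ∈ Π_N, tau polynomials P_1,...,P_a span Π_N/Π_{N-a}, polynomials Q_{a+1},...,Q_b ∈ Π_{N-a}, and q_k ∈ Π_N satisfy L(∂)q_k = Q_k with x^a dividing L̃(∂)q_k. If the b×b matrix with columns B(x^0),...,B(x^{a-1}), B(q_{a+1}),...,B(q_b) is invertible for a b-tuple of linear functionals B, then for any g ∈ ℝ^b the tau-modified equation L(∂)u + Σ_{k=1}^a τ_k P_k + Σ_{k=a+1}^b τ_k Q_k = f with B(u) = g has a unique solution (u, τ) with u ∈ Π_N. -/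

import Mathlib

open Polynomial

/-- The constant-coefficient differential operator associated to a polynomial. -/
noncomputable def diffOp (L : ℝ[X]) (u : ℝ[X]) : ℝ[X] :=
  ∑ k ∈ Finset.range (L.natDegree + 1), L.coeff k • Polynomial.derivative^[k] u

namespace TauAux

noncomputable def D : ℝ[X] →ₗ[ℝ] ℝ[X] := Polynomial.derivative

noncomputable def diffOpL (L : ℝ[X]) : ℝ[X] →ₗ[ℝ] ℝ[X] :=
  ∑ k ∈ Finset.range (L.natDegree + 1), L.coeff k • (D ^ k)

lemma D_pow_apply (k : ℕ) (u : ℝ[X]) : (D ^ k) u = Polynomial.derivative^[k] u := by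
  rw [Module.End.pow_apply]; rfl

lemma diffOp_eq (L : ℝ[X]) (u : ℝ[X]) : diffOp L u = diffOpL L u := by
  simp [diffOp, diffOpL, LinearMap.sum_apply, LinearMap.smul_apply, D_pow_apply]

lemma derivative_mem_degreeLT {n : ℕ} {p : ℝ[X]} (h : p ∈ degreeLT ℝ n) :
    derivative p ∈ degreeLT ℝ n := by
  rw [mem_degreeLT] at h ⊢
  exact lt_of_le_of_lt degree_derivative_le h

lemma derivative_mem_degreeLT_pred {n : ℕ} {p : ℝ[X]} (h : p ∈ degreeLT ℝ (n + 1)) :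
    derivative p ∈ degreeLT ℝ n := by
  rw [mem_degreeLT] at h ⊢
  rcases eq_or_ne (derivative p) 0 with h0 | h0
  · rw [h0, degree_zero]; exact WithBot.bot_lt_coe n
  have hp0 : p ≠ 0 := fun hh => h0 (by simp [hh])
  have hnd : 0 < p.natDegree := by
    rcases Nat.eq_zero_or_pos p.natDegree with h1 | h1
    · exact absurd (by conv_lhs => rw [eq_C_of_natDegree_eq_zero h1]; · simp) h0
    · exact h1
  rw [degree_derivative_eq p hnd]
  have hlt : p.natDegree < n + 1 := (natDegree_lt_iff_degree_lt hp0).mpr h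
  exact Nat.cast_lt.mpr (by omega)

lemma iterate_derivative_mem {a : ℕ} {n : ℕ} {p : ℝ[X]} (h : p ∈ degreeLT ℝ (n + a)) :
    Polynomial.derivative^[a] p ∈ degreeLT ℝ n := by
  induction a generalizing p with
  | zero => simpa using h
  | succ a ih =>
      rw [Function.iterate_succ_apply]
      exact ih (derivative_mem_degreeLT_pred (by rw [show n + a + 1 = n + (a + 1) by ring]; exact h))

lemma iterate_derivative_mem_degreeLT {n : ℕ} {p : ℝ[X]} (h : p ∈ degreeLT ℝ n) (k : ℕ) :
    Polynomial.derivative^[k] p ∈ degreeLT ℝ n := by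
  induction k with
  | zero => simpa using h
  | succ k ih => rw [Function.iterate_succ_apply']; exact derivative_mem_degreeLT ih

lemma diffOpL_mem {L : ℝ[X]} {n : ℕ} {p : ℝ[X]} (h : p ∈ degreeLT ℝ n) :
    diffOpL L p ∈ degreeLT ℝ n := by
  rw [diffOpL, LinearMap.sum_apply]
  refine Submodule.sum_mem _ fun k _ => ?_
  rw [LinearMap.smul_apply]
  refine Submodule.smul_mem _ _ ?_
  rw [D_pow_apply]
  exact iterate_derivative_mem_degreeLT h k

lemma mem_degreeLT_of_iterate_derivative_eq_zero {a : ℕ} {p : ℝ[X]}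
    (h : Polynomial.derivative^[a] p = 0) : p ∈ degreeLT ℝ a := by
  induction a generalizing p with
  | zero => simp only [Function.iterate_zero, id_eq] at h; simp [h]
  | succ a ih =>
      rw [Function.iterate_succ_apply] at h
      have hd := ih h
      rw [mem_degreeLT] at hd ⊢
      rcases eq_or_ne p 0 with rfl | hp0
      · rw [degree_zero]; exact WithBot.bot_lt_coe _
      rcases Nat.eq_zero_or_pos p.natDegree with h1 | h1
      · calc degree p ≤ 0 := by
              rw [eq_C_of_natDegree_eq_zero h1]; exact degree_C_le
          _ < ((a + 1 : ℕ) : WithBot ℕ) := by exact_mod_cast Nat.succ_pos a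
      · rw [degree_derivative_eq p h1] at hd
        have : p.natDegree - 1 < a := by exact_mod_cast hd
        exact (natDegree_lt_iff_degree_lt hp0).mp (by omega)

lemma degree_iterate_derivative_le (k : ℕ) (p : ℝ[X]) :
    (Polynomial.derivative^[k] p).degree ≤ p.degree := by
  induction k generalizing p with
  | zero => simp
  | succ k ih =>
      rw [Function.iterate_succ_apply']
      exact le_trans degree_derivative_le (ih p)

lemma degree_diffOpL {L : ℝ[X]} (hL : L.coeff 0 ≠ 0) (p : ℝ[X]) :
    (diffOpL L p).degree = p.degree := by
  rcases eq_or_ne p 0 with rfl | hp0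
  · rw [map_zero]
  have hsmul : (L.coeff 0 • p).degree = p.degree := by
    refine le_antisymm (degree_smul_le _ _) ?_
    conv_lhs => rw [show p = (L.coeff 0)⁻¹ • (L.coeff 0 • p) by
      rw [smul_smul, inv_mul_cancel₀ hL, one_smul]]
    exact degree_smul_le _ _
  have hexp : diffOpL L p =
      (∑ k ∈ Finset.range L.natDegree, L.coeff (k + 1) • Polynomial.derivative^[k + 1] p)
        + L.coeff 0 • p := by
    rw [diffOpL, LinearMap.sum_apply, Finset.sum_range_succ']
    simp [D_pow_apply]
  have htail :
      (∑ k ∈ Finset.range L.natDegree, L.coeff (k + 1) • Polynomial.derivative^[k + 1] p).degree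
        < (L.coeff 0 • p).degree := by
    rw [hsmul]
    refine lt_of_le_of_lt (degree_sum_le _ _) ?_
    rw [Finset.sup_lt_iff (by rwa [bot_lt_iff_ne_bot, Ne, degree_eq_bot])]
    intro k _
    refine lt_of_le_of_lt (degree_smul_le _ _) ?_
    rw [Function.iterate_succ_apply]
    exact lt_of_le_of_lt (degree_iterate_derivative_le k _) (degree_derivative_lt hp0)
  rw [hexp, degree_add_eq_right_of_degree_lt htail, hsmul]

lemma finrank_degreeLT (n : ℕ) : Module.finrank ℝ (degreeLT ℝ n) = n := by
  rw [(Polynomial.degreeLTEquiv ℝ n).finrank_eq, Module.finrank_fin_fun]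

instance fd_degreeLT (n : ℕ) : FiniteDimensional ℝ (degreeLT ℝ n) :=
  (Polynomial.degreeLTEquiv ℝ n).symm.finiteDimensional

end TauAux

set_option maxHeartbeats 1000000

open TauAux in
/-- **Proposition 2.4.** For `L(∂) = ∂^a L̃(∂)` with `L̃(0) ≠ 0` and `deg L̃ = b - a`:
given `f ∈ Π_N`, tau polynomials `P_1,…,P_a` spanning `Π_N/Π_{N-a}`,
`Q_{a+1},…,Q_b ∈ Π_{N-a}`, and `q_k ∈ Π_N` with `L(∂)q_k = Q_k` and `x^a ∣ L̃(∂)q_k`,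
if the matrix with columns `B(x^0),…,B(x^{a-1}),B(q_{a+1}),…,B(q_b)` is invertible,
then the tau-modified equation `L(∂)u + Σ_{k≤a} τ_k P_k + Σ_{k>a} τ_k Q_k = f`,
`B(u) = g` has a unique solution `(u, τ)` with `u ∈ Π_N`. -/
theorem tau_monomial_factor_operator
    (N a b : ℕ) (ha : 1 ≤ a) (hab : a ≤ b) (hbN : b ≤ N)
    (Lt : ℝ[X]) (hdeg : Lt.natDegree = b - a) (hLt0 : Lt.coeff 0 ≠ 0)
    (P : Fin a → ℝ[X]) (hPmem : ∀ k, P k ∈ Polynomial.degreeLT ℝ N)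
    (hPspan :
      Submodule.span ℝ
        (Set.range fun k : Fin a =>
          (Polynomial.degreeLT ℝ (N - a)).mkQ (P k)) =
      Submodule.map (Polynomial.degreeLT ℝ (N - a)).mkQ (Polynomial.degreeLT ℝ N))
    (Q : Fin (b - a) → ℝ[X]) (hQmem : ∀ k, Q k ∈ Polynomial.degreeLT ℝ (N - a))
    (q : Fin (b - a) → ℝ[X]) (hqmem : ∀ k, q k ∈ Polynomial.degreeLT ℝ N)
    (hLq : ∀ k, Polynomial.derivative^[a] (diffOp Lt (q k)) = Q k)
    (hdvd : ∀ k, (Polynomial.X : ℝ[X]) ^ a ∣ diffOp Lt (q k))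
    (B : ℝ[X] →ₗ[ℝ] (Fin b → ℝ))
    (hB : (Matrix.of fun i c : Fin b =>
      if h : (c : ℕ) < a then B (Polynomial.X ^ (c : ℕ)) i
      else B (q ⟨(c : ℕ) - a, by omega⟩) i).det ≠ 0)
    (f : ℝ[X]) (hf : f ∈ Polynomial.degreeLT ℝ N)
    (g : Fin b → ℝ) :
    ∃! w : ℝ[X] × (Fin a → ℝ) × (Fin (b - a) → ℝ),
      w.1 ∈ Polynomial.degreeLT ℝ N ∧
      Polynomial.derivative^[a] (diffOp Lt w.1)
        + ∑ k, w.2.1 k • P k + ∑ k, w.2.2 k • Q k = f ∧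
      B w.1 = g := by
  classical
  have haN : a ≤ N := le_trans hab hbN
  set S := Polynomial.degreeLT ℝ N with hS
  haveI : FiniteDimensional ℝ S := fd_degreeLT N
  have hle : Polynomial.degreeLT ℝ (N - a) ≤ S := Polynomial.degreeLT_mono (Nat.sub_le N a)
  set A : ℝ[X] →ₗ[ℝ] ℝ[X] := (D ^ a) ∘ₗ diffOpL Lt with hA
  have hAapply : ∀ u : ℝ[X], A u = Polynomial.derivative^[a] (diffOp Lt u) := by
    intro u
    rw [hA, LinearMap.comp_apply, D_pow_apply, diffOp_eq]
  have hAmem' : ∀ u ∈ S, A u ∈ Polynomial.degreeLT ℝ (N - a) := by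
    intro u hu
    rw [hA, LinearMap.comp_apply, D_pow_apply]
    refine iterate_derivative_mem ?_
    rw [Nat.sub_add_cancel haN]
    exact diffOpL_mem hu
  have hAmem : ∀ u ∈ S, A u ∈ S := fun u hu =>
    Polynomial.degreeLT_mono (Nat.sub_le N a) (hAmem' u hu)
  set pr1 := LinearMap.fst ℝ S ((Fin a → ℝ) × (Fin (b - a) → ℝ)) with hpr1
  set pr2 := LinearMap.snd ℝ S ((Fin a → ℝ) × (Fin (b - a) → ℝ)) with hpr2
  set F : (S × (Fin a → ℝ) × (Fin (b - a) → ℝ)) →ₗ[ℝ] ℝ[X] :=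
    (A ∘ₗ S.subtype) ∘ₗ pr1
      + (Fintype.linearCombination ℝ P) ∘ₗ ((LinearMap.fst ℝ (Fin a → ℝ) (Fin (b - a) → ℝ)) ∘ₗ pr2)
      + (Fintype.linearCombination ℝ Q) ∘ₗ ((LinearMap.snd ℝ (Fin a → ℝ) (Fin (b - a) → ℝ)) ∘ₗ pr2)
    with hF
  have hFapply : ∀ w : S × (Fin a → ℝ) × (Fin (b - a) → ℝ),
      F w = A ↑w.1 + ∑ k, w.2.1 k • P k + ∑ k, w.2.2 k • Q k := fun w => rfl
  have hFmem : ∀ w, F w ∈ S := by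
    intro w
    rw [hFapply]
    refine Submodule.add_mem _ (Submodule.add_mem _ (hAmem _ w.1.2) ?_) ?_
    · exact Submodule.sum_mem _ fun k _ => Submodule.smul_mem _ _ (hPmem k)
    · exact Submodule.sum_mem _ fun k _ =>
        Submodule.smul_mem _ _ (Polynomial.degreeLT_mono (Nat.sub_le N a) (hQmem k))
  set Φ : (S × (Fin a → ℝ) × (Fin (b - a) → ℝ)) →ₗ[ℝ] S × (Fin b → ℝ) :=
    LinearMap.prod (F.codRestrict S hFmem) ((B ∘ₗ S.subtype) ∘ₗ pr1) with hΦ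
  have hΦ1 : ∀ w, ((Φ w).1 : ℝ[X]) = F w := fun w => rfl
  have hΦ2 : ∀ w, (Φ w).2 = B ↑w.1 := fun w => rfl
  have hfr : ∀ n : ℕ, Module.finrank ℝ (Polynomial.degreeLT ℝ n) = n := finrank_degreeLT
  -- injectivity
  have hker : ∀ w, Φ w = 0 → w = 0 := by
    rintro ⟨⟨u, hu⟩, τ, σ⟩ hw
    have h1 : A u + ∑ k, τ k • P k + ∑ k, σ k • Q k = 0 := by
      have h1' : ((Φ (⟨u, hu⟩, τ, σ)).1 : ℝ[X]) = ((0 : S × (Fin b → ℝ)).1 : ℝ[X]) := by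
        rw [hw]
      rw [hΦ1, hFapply] at h1'
      exact h1'
    have h2 : B u = 0 := by
      have h2' : (Φ (⟨u, hu⟩, τ, σ)).2 = (0 : S × (Fin b → ℝ)).2 := by rw [hw]
      rw [hΦ2] at h2'
      exact h2'
    set π := (Polynomial.degreeLT ℝ (N - a)).mkQ with hπ
    have hWfr : Module.finrank ℝ (Submodule.map π S) = a := by
      have h5 : Submodule.map π S = LinearMap.range (π ∘ₗ S.subtype) := by
        rw [LinearMap.range_comp, Submodule.range_subtype]
      have h7 : LinearMap.ker (π ∘ₗ S.subtype)
          = Submodule.comap S.subtype (Polynomial.degreeLT ℝ (N - a)) := by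
        rw [LinearMap.ker_comp, hπ, Submodule.ker_mkQ]
      have h8 : Module.finrank ℝ
          (Submodule.comap S.subtype (Polynomial.degreeLT ℝ (N - a))) = N - a := by
        rw [(Submodule.comapSubtypeEquivOfLe hle).finrank_eq]
        exact hfr _
      have h9 : Module.finrank ℝ S = N := hfr N
      have h6 := LinearMap.finrank_range_add_finrank_ker (π ∘ₗ S.subtype)
      rw [h7, h8, h9] at h6
      rw [h5]
      omega
    have hlin : LinearIndependent ℝ (fun k : Fin a => π (P k)) := by
      rw [linearIndependent_iff_card_eq_finrank_span]
      show Fintype.card (Fin a)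
        = Module.finrank ℝ (Submodule.span ℝ (Set.range fun k : Fin a => π (P k)))
      rw [hPspan, hWfr, Fintype.card_fin]
    have hτ : τ = 0 := by
      have hmem0 : (∑ k, τ k • P k) ∈ Polynomial.degreeLT ℝ (N - a) := by
        rw [add_right_comm] at h1
        rw [eq_neg_of_add_eq_zero_right h1]
        refine Submodule.neg_mem _ (Submodule.add_mem _ (hAmem' u hu) ?_)
        exact Submodule.sum_mem _ fun k _ => Submodule.smul_mem _ _ (hQmem k)
      have hπ0 : ∑ k, τ k • π (P k) = 0 := by
        have hq0 : π (∑ k, τ k • P k) = 0 := by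
          rw [hπ, Submodule.mkQ_apply, Submodule.Quotient.mk_eq_zero]
          exact hmem0
        rw [map_sum] at hq0
        simpa [map_smul] using hq0
      exact funext (Fintype.linearIndependent_iff.mp hlin τ hπ0)
    subst hτ
    simp only [Pi.zero_apply, zero_smul, Finset.sum_const_zero, add_zero] at h1
    have hQA : ∀ k, Q k = A (q k) := fun k => by rw [hAapply, hLq]
    set z : ℝ[X] := u + ∑ k, σ k • q k with hz
    have hAz : A z = 0 := by
      rw [hz, map_add, map_sum]
      simp only [map_smul, ← hQA]
      exact h1
    have hzdeg : z ∈ Polynomial.degreeLT ℝ a := by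
      rw [hA, LinearMap.comp_apply, D_pow_apply] at hAz
      have h9 := mem_degreeLT_of_iterate_derivative_eq_zero hAz
      rw [mem_degreeLT] at h9 ⊢
      rwa [degree_diffOpL hLt0] at h9
    have hznd : z.natDegree < a := by
      rcases eq_or_ne z 0 with h0 | h0
      · rw [h0, natDegree_zero]; omega
      · exact (natDegree_lt_iff_degree_lt h0).mpr (mem_degreeLT.mp hzdeg)
    set c : Fin b → ℝ :=
      fun j => if h : (j : ℕ) < a then z.coeff j else -σ ⟨(j : ℕ) - a, by omega⟩ with hc
    have hcpos : ∀ (j : Fin b) (hj : (j : ℕ) < a), c j = z.coeff (j : ℕ) :=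
      fun j hj => dif_pos hj
    have hcneg : ∀ (j : Fin b) (hj : ¬ (j : ℕ) < a),
        c j = -σ ⟨(j : ℕ) - a, by omega⟩ := fun j hj => dif_neg hj
    have hBz : ∀ i, B z i = ∑ j ∈ Finset.range a, B (X ^ j) i * z.coeff j := by
      intro i
      conv_lhs => rw [z.as_sum_range' a hznd]
      rw [map_sum, Finset.sum_apply]
      refine Finset.sum_congr rfl fun j _ => ?_
      rw [← smul_X_eq_monomial, map_smul]
      simp [mul_comm]
    have hBu : ∀ i, B u i = B z i - ∑ k, B (q k) i * σ k := by
      intro i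
      have hzz : u = z - ∑ k, σ k • q k := by rw [hz]; abel
      rw [hzz, map_sub, map_sum, Pi.sub_apply, Finset.sum_apply]
      congr 1
      refine Finset.sum_congr rfl fun k _ => ?_
      rw [map_smul]
      simp [mul_comm]
    have hMc : (Matrix.of fun i c : Fin b =>
        if h : (c : ℕ) < a then B (Polynomial.X ^ (c : ℕ)) i
        else B (q ⟨(c : ℕ) - a, by omega⟩) i).mulVec c = 0 := by
      funext i
      set G : ℕ → ℝ := fun n => if h : n < a then B (X ^ n) i * z.coeff n
          else (if h' : n - a < b - a then -(B (q ⟨n - a, h'⟩) i * σ ⟨n - a, h'⟩) else 0) with hG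
      have hGpos : ∀ n (h : n < a), G n = B (X ^ n) i * z.coeff n := fun n h => dif_pos h
      have hGneg : ∀ n (h : ¬ n < a) (h' : n - a < b - a),
          G n = -(B (q ⟨n - a, h'⟩) i * σ ⟨n - a, h'⟩) :=
        fun n h h' => (dif_neg h).trans (dif_pos h')
      set H : ℕ → ℝ := fun m => if h : m < b - a then -(B (q ⟨m, h⟩) i * σ ⟨m, h⟩) else 0 with hH
      have step0 : ((Matrix.of fun i c : Fin b =>
          if h : (c : ℕ) < a then B (Polynomial.X ^ (c : ℕ)) i
          else B (q ⟨(c : ℕ) - a, by omega⟩) i).mulVec c) i = ∑ j : Fin b, G (j : ℕ) := by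
        simp only [Matrix.mulVec, dotProduct, Matrix.of_apply]
        refine Finset.sum_congr rfl fun j _ => ?_
        by_cases hj : (j : ℕ) < a
        · rw [hcpos j hj, hGpos _ hj, dif_pos hj]
        · rw [hcneg j hj, hGneg _ hj (by omega), dif_neg hj]
          exact mul_neg _ _
      have step2 : ∑ n ∈ Finset.range b, G n
          = ∑ n ∈ Finset.range a, G n + ∑ n ∈ Finset.Ico a b, G n := by
        rw [Finset.range_eq_Ico, Finset.range_eq_Ico, Finset.sum_Ico_consecutive _ (Nat.zero_le a) hab]
      have step3 : ∑ n ∈ Finset.range a, G n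
          = ∑ n ∈ Finset.range a, B (X ^ n) i * z.coeff n :=
        Finset.sum_congr rfl fun n hn => hGpos n (Finset.mem_range.mp hn)
      have hHsum : -∑ k, B (q k) i * σ k = ∑ m ∈ Finset.range (b - a), H m := by
        rw [← Fin.sum_univ_eq_sum_range H (b - a), ← Finset.sum_neg_distrib]
        refine Finset.sum_congr rfl fun k _ => ?_
        have : H (k : ℕ) = -(B (q ⟨(k : ℕ), k.isLt⟩) i * σ ⟨(k : ℕ), k.isLt⟩) := dif_pos k.isLt
        rw [this]
      have step4 : ∑ n ∈ Finset.Ico a b, G n = -∑ k, B (q k) i * σ k := by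
        rw [Finset.sum_Ico_eq_sum_range, hHsum]
        refine Finset.sum_congr rfl fun m hm => ?_
        have hm' : m < b - a := Finset.mem_range.mp hm
        have e1 : H m = -(B (q ⟨m, hm'⟩) i * σ ⟨m, hm'⟩) := dif_pos hm'
        rw [hGneg (a + m) (by omega) (by omega), e1]
        have e2 : (⟨a + m - a, by omega⟩ : Fin (b - a)) = (⟨m, hm'⟩ : Fin (b - a)) := by
          apply Fin.ext
          show a + m - a = m
          omega
        rw [e2]
      have h20 : (0 : Fin b → ℝ) i = B z i - ∑ k, B (q k) i * σ k := by
        rw [← h2]; exact hBu i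
      rw [step0, Fin.sum_univ_eq_sum_range G b, step2, step3, step4, ← hBz]
      simp only [Pi.zero_apply] at h20 ⊢
      linarith [h20]
    have hc0 : c = 0 := Matrix.eq_zero_of_mulVec_eq_zero hB hMc
    have hσ : σ = 0 := by
      funext k
      have h11 : c ⟨a + (k : ℕ), by omega⟩ = 0 := congrFun hc0 _
      have h13 : c ⟨a + (k : ℕ), by omega⟩ = -σ k := by
        have e : (⟨(a + (k : ℕ)) - a, by omega⟩ : Fin (b - a)) = k := by
          apply Fin.ext
          show (a + (k : ℕ)) - a = (k : ℕ)
          omega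
        rw [hcneg ⟨a + (k : ℕ), by omega⟩ (by show ¬ a + (k : ℕ) < a; omega)]
        show -σ (⟨(a + (k : ℕ)) - a, by omega⟩ : Fin (b - a)) = -σ k
        rw [e]
      rw [h13] at h11
      simpa using h11
    have hz0 : z = 0 := by
      rw [z.as_sum_range' a hznd]
      refine Finset.sum_eq_zero fun j hj => ?_
      have hja : j < a := Finset.mem_range.mp hj
      have h13 : z.coeff j = 0 :=
        (hcpos ⟨j, by omega⟩ (by show j < a; omega)).symm.trans
          (congrFun hc0 ⟨j, by omega⟩)
      rw [h13, Polynomial.monomial_zero_right]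
    have hu0 : u = 0 := by
      have hzz : u = z - ∑ k, σ k • q k := by rw [hz]; abel
      rw [hzz, hz0, hσ]
      simp
    subst hσ
    refine Prod.ext (Subtype.ext ?_) (Prod.ext ?_ ?_)
    · exact hu0
    · rfl
    · rfl
  have hinj : Function.Injective Φ := by
    rw [← LinearMap.ker_eq_bot]
    exact (Submodule.eq_bot_iff _).mpr fun w hw => hker w (LinearMap.mem_ker.mp hw)
  have hdim : Module.finrank ℝ (S × (Fin a → ℝ) × (Fin (b - a) → ℝ))
      = Module.finrank ℝ (S × (Fin b → ℝ)) := by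
    rw [Module.finrank_prod, Module.finrank_prod, Module.finrank_prod,
      Module.finrank_fin_fun, Module.finrank_fin_fun, Module.finrank_fin_fun, hS, hfr]
    omega
  have hsurj : Function.Surjective Φ :=
    (LinearMap.injective_iff_surjective_of_finrank_eq_finrank hdim).mp hinj
  obtain ⟨w0, hw0⟩ := hsurj (⟨f, hf⟩, g)
  have hw0a : F w0 = f := by
    have h := hΦ1 w0
    rw [hw0] at h
    exact h.symm
  have hw0b : B ↑w0.1 = g := by
    have h := hΦ2 w0
    rw [hw0] at h
    exact h.symm
  refine ⟨((w0.1 : ℝ[X]), w0.2.1, w0.2.2), ⟨w0.1.2, ?_, hw0b⟩, ?_⟩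
  · show Polynomial.derivative^[a] (diffOp Lt ↑w0.1)
      + ∑ k, w0.2.1 k • P k + ∑ k, w0.2.2 k • Q k = f
    rw [← hAapply]
    rw [hFapply] at hw0a
    exact hw0a
  · rintro ⟨u, τ, σ⟩ ⟨hu, heq, hBg⟩
    have hΦeq : Φ (⟨u, hu⟩, τ, σ) = (⟨f, hf⟩, g) := by
      refine Prod.ext (Subtype.ext ?_) ?_
      · rw [hΦ1, hFapply]
        simpa [hAapply] using heq
      · rw [hΦ2]
        exact hBg
    have h14 := hinj (hΦeq.trans hw0.symm)
    have h15 : u = (w0.1 : ℝ[X]) := by rw [← h14]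
    have h16 : τ = w0.2.1 := by rw [← h14]
    have h17 : σ = w0.2.2 := by rw [← h14]
    rw [h15, h16, h17]
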